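/- arXiv:1804.08014 — 2 statements merged into one kernel-verified Lean document; each statement's English description precedes it below -/
import Mathlib

section
/- Let C ≥ 0 and λ ∈ ℝ. There exists a nonzero continuously differentiable 1-periodic pair of real functions (x₁, x₂) : ℝ → ℝ² satisfying x₁′(t) = −λ·x₂(t) and x₂′(t) = (λ + C)·x₁(t) for all t, if and only if λ(λ + C) = 4π²k² for some integer k. -/
open Real

/-
Identify the pair with the complex-valued combination z = c x₁ - a x₂, where c ∈ ℂ is a square root
of -ab: then z' = c z, so z(t) = z(0) e^{ct}. Along a nonzero 1-periodic solution one of the two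
choices ±c gives a z that does not vanish identically, and periodicity of z forces e^c = 1, that is
c = 2πin with n ∈ ℤ, whence ab = -c² = 4π²n². Conversely, for ω = 2πk the pair
(a cos ωt, ω sin ωt) is a 1-periodic solution, nonzero unless a = 0, when (0, 1) is one.
-/

theorem eq_mul_exp_of_hasDerivAt_mul {z : ℝ → ℂ} {c : ℂ}
    (hz : ∀ t, HasDerivAt z (c * z t) t) (t : ℝ) : z t = z 0 * Complex.exp (c * t) := by
  have hderiv : ∀ s : ℝ, HasDerivAt (fun s : ℝ => z s * Complex.exp (-(c * s))) 0 s := by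
    intro s
    have hlin : HasDerivAt (fun s : ℝ => -(c * s)) (-c) s :=
      ((hasDerivAt_id s).ofReal_comp.const_mul c).neg.congr_deriv (by simp)
    exact ((hz s).mul hlin.cexp).congr_deriv (by ring)
  have hconst := is_const_of_deriv_eq_zero (fun s => (hderiv s).differentiableAt)
    (fun s => (hderiv s).deriv) t 0
  simp only [Complex.ofReal_zero, mul_zero, neg_zero, Complex.exp_zero, mul_one] at hconst
  rw [← hconst, mul_assoc, ← Complex.exp_add, neg_add_cancel, Complex.exp_zero, mul_one]

theorem exists_int_eq_mul_two_pi_I_of_periodic {z : ℝ → ℂ} {c : ℂ}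
    (hz : ∀ t, HasDerivAt z (c * z t) t) (hper : Function.Periodic z 1) {t₀ : ℝ}
    (ht₀ : z t₀ ≠ 0) : ∃ n : ℤ, c = n * (2 * π * Complex.I) := by
  rw [← Complex.exp_eq_one_iff]
  have hshift : z (t₀ + 1) = z t₀ * Complex.exp c := by
    rw [eq_mul_exp_of_hasDerivAt_mul hz, eq_mul_exp_of_hasDerivAt_mul hz t₀, mul_assoc,
      ← Complex.exp_add, Complex.ofReal_add, Complex.ofReal_one, mul_add_one]
  rw [hper] at hshift
  exact (mul_eq_left₀ ht₀).mp hshift.symm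

section LinearSystem

variable {a b : ℝ} {x₁ x₂ : ℝ → ℝ}

theorem hasDerivAt_eigencombination (h₁ : ∀ t, HasDerivAt x₁ (-a * x₂ t) t)
    (h₂ : ∀ t, HasDerivAt x₂ (b * x₁ t) t) {c : ℂ} (hc : c * c = -(a * b)) (t : ℝ) :
    HasDerivAt (fun t => c * x₁ t - a * x₂ t) (c * (c * x₁ t - a * x₂ t)) t := by
  refine (((h₁ t).ofReal_comp.const_mul c).sub
    ((h₂ t).ofReal_comp.const_mul (a : ℂ))).congr_deriv ?_
  push_cast
  linear_combination -(x₁ t : ℂ) * hc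

theorem exists_int_of_eigencombination_ne_zero
    (h₁ : ∀ t, HasDerivAt x₁ (-a * x₂ t) t) (h₂ : ∀ t, HasDerivAt x₂ (b * x₁ t) t)
    (hp₁ : Function.Periodic x₁ 1) (hp₂ : Function.Periodic x₂ 1) {c : ℂ}
    (hc : c * c = -(a * b)) {t₀ : ℝ} (ht₀ : c * x₁ t₀ - a * x₂ t₀ ≠ 0) :
    ∃ k : ℤ, a * b = 4 * π ^ 2 * (k : ℝ) ^ 2 := by
  have hper : Function.Periodic (fun t => c * x₁ t - a * x₂ t) 1 := fun t => by
    simp only [hp₁ t, hp₂ t]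
  obtain ⟨n, rfl⟩ := exists_int_eq_mul_two_pi_I_of_periodic
    (hasDerivAt_eigencombination h₁ h₂ hc) hper ht₀
  refine ⟨n, ?_⟩
  exact_mod_cast (by push_cast; linear_combination hc - 4 * π ^ 2 * n ^ 2 * Complex.I_sq :
    ((a * b : ℝ) : ℂ) = ((4 * π ^ 2 * n ^ 2 : ℝ) : ℂ))

theorem exists_int_of_periodic_solution
    (h₁ : ∀ t, HasDerivAt x₁ (-a * x₂ t) t) (h₂ : ∀ t, HasDerivAt x₂ (b * x₁ t) t)
    (hp₁ : Function.Periodic x₁ 1) (hp₂ : Function.Periodic x₂ 1)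
    (hne : ∃ t, x₁ t ≠ 0 ∨ x₂ t ≠ 0) : ∃ k : ℤ, a * b = 4 * π ^ 2 * (k : ℝ) ^ 2 := by
  by_cases hab : a * b = 0
  · exact ⟨0, by simp [hab]⟩
  obtain ⟨t₀, ht₀⟩ := hne
  obtain ⟨c, hc⟩ := IsAlgClosed.exists_eq_mul_self (-(a * b) : ℂ)
  have hc0 : c ≠ 0 := by
    rintro rfl
    exact hab (by exact_mod_cast neg_eq_zero.mp (hc.trans (mul_zero 0)))
  have ha : (a : ℂ) ≠ 0 := by exact_mod_cast left_ne_zero_of_mul hab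
  by_cases hz : c * x₁ t₀ - a * x₂ t₀ = 0
  · refine exists_int_of_eigencombination_ne_zero h₁ h₂ hp₁ hp₂ (c := -c)
      (by rw [neg_mul_neg, hc]) (t₀ := t₀) fun hz' => ?_
    have hx₁ : (x₁ t₀ : ℂ) = 0 := by
      have : 2 * c * x₁ t₀ = 0 := by linear_combination hz - hz'
      simpa [hc0] using this
    have hx₂ : (x₂ t₀ : ℂ) = 0 := by simpa [hx₁, ha] using hz
    exact ht₀.elim (· (Complex.ofReal_eq_zero.mp hx₁)) (· (Complex.ofReal_eq_zero.mp hx₂))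
  · exact exists_int_of_eigencombination_ne_zero h₁ h₂ hp₁ hp₂ hc.symm hz

end LinearSystem

theorem Function.Periodic.comp_two_pi_int_mul {f : ℝ → ℝ} (hf : Function.Periodic f (2 * π))
    (k : ℤ) : Function.Periodic (fun t => f (2 * π * k * t)) 1 := fun t => by
  dsimp only
  rw [show 2 * π * k * (t + 1) = 2 * π * k * t + k * (2 * π) by ring]
  exact hf.int_mul k _

theorem exists_periodic_solution {a b : ℝ} {k : ℤ} (hk : a * b = 4 * π ^ 2 * (k : ℝ) ^ 2) :
    ∃ x₁ x₂ : ℝ → ℝ, ContDiff ℝ 1 x₁ ∧ ContDiff ℝ 1 x₂ ∧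
      Function.Periodic x₁ 1 ∧ Function.Periodic x₂ 1 ∧ (∃ t, x₁ t ≠ 0 ∨ x₂ t ≠ 0) ∧
      (∀ t, HasDerivAt x₁ (-a * x₂ t) t) ∧ (∀ t, HasDerivAt x₂ (b * x₁ t) t) := by
  by_cases ha : a = 0
  · refine ⟨fun _ => 0, fun _ => 1, contDiff_const, contDiff_const, fun _ => rfl, fun _ => rfl,
      ⟨0, Or.inr one_ne_zero⟩, fun t => ?_, fun t => ?_⟩
    · simpa [ha] using hasDerivAt_const t (0 : ℝ)
    · simpa using hasDerivAt_const t (1 : ℝ)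
  set ω := 2 * π * k with hω
  have hω2 : ω ^ 2 = a * b := by rw [hk, hω]; ring
  refine ⟨fun t => a * cos (ω * t), fun t => ω * sin (ω * t), by fun_prop, by fun_prop,
    fun t => congrArg (a * ·) (cos_periodic.comp_two_pi_int_mul k t),
    fun t => congrArg (ω * ·) (sin_periodic.comp_two_pi_int_mul k t),
    ⟨0, Or.inl (by simp [ha])⟩, fun t => ?_, fun t => ?_⟩
  · exact (((hasDerivAt_id t).const_mul ω).cos.const_mul a).congr_deriv
      (by simp only [id, mul_one]; ring)
  · exact (((hasDerivAt_id t).const_mul ω).sin.const_mul ω).congr_deriv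
      (by simp only [id, mul_one]; linear_combination cos (ω * t) * hω2)

theorem stmt2_general (C : ℝ) (lam : ℝ) :
    (∃ x₁ x₂ : ℝ → ℝ,
        ContDiff ℝ 1 x₁ ∧ ContDiff ℝ 1 x₂ ∧
        Function.Periodic x₁ 1 ∧ Function.Periodic x₂ 1 ∧
        (∃ t, x₁ t ≠ 0 ∨ x₂ t ≠ 0) ∧
        (∀ t : ℝ, deriv x₁ t = -lam * x₂ t) ∧
        (∀ t : ℝ, deriv x₂ t = (lam + C) * x₁ t)) ↔
      ∃ k : ℤ, lam * (lam + C) = 4 * π ^ 2 * (k : ℝ) ^ 2 := by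
  constructor
  · rintro ⟨x₁, x₂, h₁, h₂, hp₁, hp₂, hne, hd₁, hd₂⟩
    refine exists_int_of_periodic_solution (fun t => ?_) (fun t => ?_) hp₁ hp₂ hne
    · exact hd₁ t ▸ (h₁.differentiable one_ne_zero t).hasDerivAt
    · exact hd₂ t ▸ (h₂.differentiable one_ne_zero t).hasDerivAt
  · rintro ⟨k, hk⟩
    obtain ⟨x₁, x₂, h₁, h₂, hp₁, hp₂, hne, hd₁, hd₂⟩ := exists_periodic_solution hk
    exact ⟨x₁, x₂, h₁, h₂, hp₁, hp₂, hne, fun t => (hd₁ t).deriv, fun t => (hd₂ t).deriv⟩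

theorem stmt2 (C : ℝ) (hC : 0 ≤ C) (lam : ℝ) :
    (∃ x₁ x₂ : ℝ → ℝ,
        ContDiff ℝ 1 x₁ ∧ ContDiff ℝ 1 x₂ ∧
        Function.Periodic x₁ 1 ∧ Function.Periodic x₂ 1 ∧
        (∃ t, x₁ t ≠ 0 ∨ x₂ t ≠ 0) ∧
        (∀ t : ℝ, deriv x₁ t = -lam * x₂ t) ∧
        (∀ t : ℝ, deriv x₂ t = (lam + C) * x₁ t)) ↔
      ∃ k : ℤ, lam * (lam + C) = 4 * π ^ 2 * (k : ℝ) ^ 2 :=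
  stmt2_general C lam
end

section
/- Let g : ℝ → ℝ be continuous and strictly decreasing, with g(b) = 0. Let y : ℝ → ℝ be differentiable with y′(s) = g(y(s)) for all s, and suppose y(s) → b as s → −∞. Then y(s) = b for all s. -/
/-! The squared distance `(y s - b) ^ 2` is a Lyapunov function: its derivative
`2 (y - b) g(y)` is nonpositive because `g` is antitone and vanishes at `b`. So it is
antitone in `s`, and since it tends to `0` as `s → -∞` it must vanish identically. -/

open Real

theorem Antitone.sub_mul_nonpos {α : Type*} [Ring α] [LinearOrder α] [IsOrderedRing α]
    {g : α → α} {b : α} (hg : Antitone g) (hgb : g b = 0) (x : α) :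
    (x - b) * g x ≤ 0 := by
  rcases le_total x b with hxb | hbx
  · exact mul_nonpos_of_nonpos_of_nonneg (sub_nonpos.2 hxb) (hgb ▸ hg hxb)
  · exact mul_nonpos_of_nonneg_of_nonpos (sub_nonneg.2 hbx) (hgb ▸ hg hbx)

theorem antitone_sq_sub_of_hasDerivAt {g y : ℝ → ℝ} {b : ℝ}
    (hy : ∀ s, HasDerivAt y (g (y s)) s) (hg : ∀ x, (x - b) * g x ≤ 0) :
    Antitone fun s => (y s - b) ^ 2 := by
  have hV : ∀ s, HasDerivAt (fun s => (y s - b) ^ 2) (2 * ((y s - b) * g (y s))) s := by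
    intro s
    refine (((hy s).sub_const b).fun_pow 2).congr_deriv ?_
    norm_num
    ring
  refine antitone_of_deriv_nonpos (fun s => (hV s).differentiableAt) fun s => ?_
  rw [(hV s).deriv]
  nlinarith [hg (y s)]

theorem stmt8_general (g : ℝ → ℝ) (b : ℝ)
    (hga : StrictAnti g) (hgb : g b = 0)
    (y : ℝ → ℝ)
    (hy : ∀ s : ℝ, HasDerivAt y (g (y s)) s)
    (hlim : Filter.Tendsto y Filter.atBot (nhds b)) :
    ∀ s : ℝ, y s = b := by
  have hV := antitone_sq_sub_of_hasDerivAt hy (hga.antitone.sub_mul_nonpos hgb)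
  have hVlim : Filter.Tendsto (fun s => (y s - b) ^ 2) Filter.atBot (nhds 0) := by
    simpa using (hlim.sub_const b).pow 2
  intro s
  have hle : (y s - b) ^ 2 ≤ 0 := hV.ge_of_tendsto hVlim s
  nlinarith [sq_nonneg (y s - b)]

theorem stmt8 (g : ℝ → ℝ) (b : ℝ)
    (hgc : Continuous g) (hga : StrictAnti g) (hgb : g b = 0)
    (y : ℝ → ℝ)
    (hy : ∀ s : ℝ, HasDerivAt y (g (y s)) s)
    (hlim : Filter.Tendsto y Filter.atBot (nhds b)) :
    ∀ s : ℝ, y s = b :=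
  stmt8_general g b hga hgb y hy hlim
end
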